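/- Let m ≥ 2 and let Δ be a graph with vertex set {1, −1, 2, −2, …, m, −m} that is preserved by the group ⟨τ⟩ × Sym(m) ≤ C2 ≀ Sym(m). Then Δ is isomorphic to K_m □ K_2, K_{m,m}, mK_2, K_{2m}, or the complement of one of these graphs. Moreover, if μ(Δ) = 4, then m ≥ 3 and Δ is isomorphic to K_m □ K_2 or to its complement. -/

import Mathlib

/-!
The group `⟨τ⟩ × Sym(m)` has exactly three orbitals on unordered pairs of distinct vertices:
`{i, -i}`, `{i, j}` (and `{-i, -j}`), and `{i, -j}`, for `i ≠ j`. A graph it preserves is a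
union of some of them, and the eight choices give the eight graphs.
If the orbitals `{i, -i}` and `{i, -j}` are both edges or both non-edges, then `1` and `2` are
twins; if `{i, j}` and `{i, -j}` agree, then `1` and `-1` are twins; and for `m = 2`, if
`{i, -i}` and `{i, j}` agree, then `1` and `-2` are twins. Transposing twins is an automorphism
moving two points, so motion `4` forces `{i, -i}` and `{i, j}` to agree, `{i, -j}` to differ
from them, and `m ≥ 3`.
-/

open Equiv Pointwise

/-- A graph is vertex-transitive if its automorphism group is transitive on the
vertices. -/
def IsVertexTransitive {V : Type*} (Γ : SimpleGraph V) : Prop :=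
  ∀ u v : V, ∃ e : Γ ≃g Γ, e u = v

/-- The motion of a graph: the least number of vertices moved by a non-identity
automorphism (i.e. the minimal degree of its automorphism group). -/
noncomputable def motion {V : Type*} [Fintype V] [DecidableEq V] (Γ : SimpleGraph V) : ℕ :=
  sInf {n | ∃ e : Γ ≃g Γ, (e.toEquiv : Equiv.Perm V) ≠ 1 ∧
    (Equiv.Perm.support (e.toEquiv : Equiv.Perm V)).card = n}

/-- The element of the imprimitive wreath product determined by a function
`g : ι → Perm Δ` and a permutation `h` of the index set, acting on `Δ × ι` by
`(δ, i) ↦ (g i δ, h i)`. -/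
def wreathPerm {Δ ι : Type*} (g : ι → Equiv.Perm Δ) (h : Equiv.Perm ι) :
    Equiv.Perm (Δ × ι) where
  toFun x := (g x.2 x.1, h x.2)
  invFun x := ((g (h⁻¹ x.2))⁻¹ x.1, h⁻¹ x.2)
  left_inv := by rintro ⟨d, i⟩; simp
  right_inv := by rintro ⟨d, i⟩; simp

/-- The imprimitive wreath product `Y ≀ H` of permutation groups, as a permutation
group on `Δ × ι`.  (The defining set is already a subgroup, so taking the
subgroup closure does not change it.) -/
def wreathProduct {Δ ι : Type*} (Y : Subgroup (Equiv.Perm Δ))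
    (H : Subgroup (Equiv.Perm ι)) : Subgroup (Equiv.Perm (Δ × ι)) :=
  Subgroup.closure {σ | ∃ (g : ι → Equiv.Perm Δ) (h : Equiv.Perm ι),
    (∀ i, g i ∈ Y) ∧ h ∈ H ∧ σ = wreathPerm g h}

/-- The copy `X^ι` of a power of `X` inside the base group of a wreath product,
as a permutation group on `Δ × ι`. -/
def basePower {Δ ι : Type*} (X : Subgroup (Equiv.Perm Δ)) :
    Subgroup (Equiv.Perm (Δ × ι)) :=
  Subgroup.closure {σ | ∃ g : ι → Equiv.Perm Δ, (∀ i, g i ∈ X) ∧ σ = wreathPerm g 1}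

/-- Transport of permutations along a bijection, as a group isomorphism. -/
def permMapEquiv {α β : Type*} (f : α ≃ β) : Equiv.Perm α ≃* Equiv.Perm β where
  toFun g := (f.symm.trans g).trans f
  invFun g := (f.trans g).trans f.symm
  left_inv g := by ext x; simp
  right_inv g := by ext x; simp
  map_mul' g₁ g₂ := by ext x; simp [Equiv.Perm.mul_apply]

/-- Transport of a permutation group along a bijection of the underlying sets.
`mapPermGroup f G` is the permutation group on `β` corresponding to `G` under the
relabelling `f`; thus `G` and `mapPermGroup f G` are permutation isomorphic. -/
def mapPermGroup {α β : Type*} (f : α ≃ β) (G : Subgroup (Equiv.Perm α)) :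
    Subgroup (Equiv.Perm β) :=
  Subgroup.map (permMapEquiv f).toMonoidHom G

/-- The full wreath product `C₂ ≀ Sym(m)` acting on `Fin 2 × Fin m` (the set
`{1, -1, …, m, -m}`), where the `i`-th base coordinate swaps `(0,i)` and `(1,i)`
and `Sym(m)` permutes the pairs. -/
def fullC2Wreath (m : ℕ) : Subgroup (Equiv.Perm (Fin 2 × Fin m)) :=
  Subgroup.closure {σ | ∃ (g : Fin m → Equiv.Perm (Fin 2)) (h : Equiv.Perm (Fin m)),
    σ = wreathPerm g h}

/-- The subgroup `{1} × Sym(m)` of `C₂ ≀ Sym(m)`. -/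
def symPart (m : ℕ) : Subgroup (Equiv.Perm (Fin 2 × Fin m)) :=
  Subgroup.closure {σ | ∃ h : Equiv.Perm (Fin m), σ = wreathPerm (fun _ => 1) h}

/-- The superflip `τ`: the base-group element swapping `i` and `-i` for every `i`. -/
def superflip (m : ℕ) : Equiv.Perm (Fin 2 × Fin m) :=
  wreathPerm (fun _ => Equiv.swap 0 1) 1

/-- The subgroup `⟨τ⟩ × Sym(m)` of `C₂ ≀ Sym(m)`. -/
def flipSym (m : ℕ) : Subgroup (Equiv.Perm (Fin 2 × Fin m)) :=
  Subgroup.zpowers (superflip m) ⊔ symPart m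

/-- The augmentation subgroup `(C₂^m)⁺ × {1}` of the base group of `C₂ ≀ Sym(m)`:
tuples with an even number of non-trivial entries. -/
def evenBase (m : ℕ) : Subgroup (Equiv.Perm (Fin 2 × Fin m)) :=
  Subgroup.closure {σ | ∃ g : Fin m → Equiv.Perm (Fin 2),
    Even (Finset.univ.filter (fun i => g i ≠ 1)).card ∧ σ = wreathPerm g 1}

/-- The subgroup `(C₂^m)⁺ ⋊ Sym(m)` of `C₂ ≀ Sym(m)`. -/
def evenWreath (m : ℕ) : Subgroup (Equiv.Perm (Fin 2 × Fin m)) :=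
  evenBase m ⊔ symPart m

/-- The full automorphism group of a graph, as a subgroup of the symmetric group on
its vertex set. -/
def autGroup {V : Type*} (Γ : SimpleGraph V) : Subgroup (Equiv.Perm V) where
  carrier := {σ | ∀ u v : V, Γ.Adj (σ u) (σ v) ↔ Γ.Adj u v}
  one_mem' := by intro u v; rfl
  mul_mem' := by
    intro a b ha hb u v
    simp only [Set.mem_setOf_eq] at *
    rw [Equiv.Perm.mul_apply, Equiv.Perm.mul_apply, ha, hb]
  inv_mem' := by
    intro a ha u v
    simp only [Set.mem_setOf_eq] at *
    rw [← ha (a⁻¹ u) (a⁻¹ v)]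
    simp

/-- The 5-cycle `C₅`, as a graph on `ZMod 5`. -/
def C5 : SimpleGraph (ZMod 5) := SimpleGraph.fromRel (fun x y => x - y = 1)

/-- The perfect matching `m K₂` on the vertex set `Fin 2 × Fin m`. -/
def matching (m : ℕ) : SimpleGraph (Fin 2 × Fin m) :=
  SimpleGraph.fromRel (fun x y => x.2 = y.2 ∧ x.1 ≠ y.1)

/-- The Cartesian product `K_m □ K₂` on the vertex set `Fin 2 × Fin m`. -/
def prism (m : ℕ) : SimpleGraph (Fin 2 × Fin m) :=
  SimpleGraph.fromRel (fun x y => (x.2 = y.2 ∧ x.1 ≠ y.1) ∨ (x.1 = y.1 ∧ x.2 ≠ y.2))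

/-- The complete bipartite graph `K_{m,m}` on the vertex set `Fin 2 × Fin m`. -/
def completeBip (m : ℕ) : SimpleGraph (Fin 2 × Fin m) :=
  SimpleGraph.fromRel (fun x y => x.1 ≠ y.1)


theorem Equiv.Perm.exists_apply_eq_apply_eq {α : Type*} [DecidableEq α] {a b a' b' : α}
    (h : a = b ↔ a' = b') : ∃ σ : Perm α, σ a = a' ∧ σ b = b' := by
  refine ⟨swap (swap a a' b) b' * swap a a', ?_, by simp⟩
  by_cases hab : a = b
  · subst hab; simp [h.mp rfl]
  · have hne : swap a a' a ≠ swap a a' b := (swap a a').injective.ne hab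
    rw [swap_apply_left] at hne
    simpa using swap_apply_of_ne_of_ne hne (fun e => hab (h.mpr e))

lemma Fin.swap_zero_one_apply_eq_iff {a b : Fin 2} : swap 0 1 a = b ↔ a ≠ b := by
  revert a b; decide

section Motion

variable {V : Type*} {Γ : SimpleGraph V}

lemma swap_mem_autGroup [DecidableEq V] {u v : V}
    (h : ∀ w, w ≠ u → w ≠ v → (Γ.Adj u w ↔ Γ.Adj v w)) : swap u v ∈ autGroup Γ := by
  suffices hmap : ∀ x y, Γ.Adj x y → Γ.Adj (swap u v x) (swap u v y) from
    fun x y => ⟨fun hxy => by simpa using hmap _ _ hxy, hmap x y⟩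
  intro x y hxy
  rw [swap_apply_def, swap_apply_def]
  split_ifs <;> subst_vars <;> grind [SimpleGraph.adj_comm, SimpleGraph.irrefl]

lemma motion_le_card_support [Fintype V] [DecidableEq V] {σ : Perm V} (hσ : σ ∈ autGroup Γ)
    (hσ₁ : σ ≠ 1) : motion Γ ≤ σ.support.card :=
  Nat.sInf_le ⟨⟨σ, hσ _ _⟩, hσ₁, rfl⟩

lemma motion_le_two_of_twins [Fintype V] [DecidableEq V] {u v : V} (huv : u ≠ v)
    (h : ∀ w, w ≠ u → w ≠ v → (Γ.Adj u w ↔ Γ.Adj v w)) : motion Γ ≤ 2 :=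
  (Perm.card_support_swap huv).le.trans' <|
    motion_le_card_support (swap_mem_autGroup h) (mt swap_eq_one_iff.mp huv)

end Motion

/-- The union of the orbitals of `flipSym m` selected by the flags, writing `i` for `(0, i)` and
`-i` for `(1, i)`: the pairs `{i, -i}` if `pair`, `{i, j}` and `{-i, -j}` with `i ≠ j` if `layer`,
and `{i, -j}` with `i ≠ j` if `cross`. -/
def flipSymGraph (m : ℕ) (pair layer cross : Bool) : SimpleGraph (Fin 2 × Fin m) where
  Adj x y := x ≠ y ∧ (if x.2 = y.2 then pair else if x.1 = y.1 then layer else cross) = true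
  symm := ⟨fun x y h => ⟨h.1.symm, by simpa only [@eq_comm _ y.2, @eq_comm _ y.1] using h.2⟩⟩
  loopless := ⟨fun x h => h.1 rfl⟩

instance {m : ℕ} (pair layer cross : Bool) : DecidableRel (flipSymGraph m pair layer cross).Adj :=
  fun _ _ => inferInstanceAs (Decidable (_ ∧ _))

section FlipSymGraph

variable {m : ℕ} {pair layer cross : Bool}

lemma wreathPerm_one_mem_flipSym (h : Perm (Fin m)) : wreathPerm (fun _ => 1) h ∈ flipSym m :=
  Subgroup.mem_sup_right (Subgroup.subset_closure ⟨h, rfl⟩)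

lemma superflip_mem_flipSym : superflip m ∈ flipSym m :=
  Subgroup.mem_sup_left (Subgroup.mem_zpowers _)

lemma exists_mem_flipSym_apply_eq {x y x' y' : Fin 2 × Fin m}
    (h₁ : x.1 = y.1 ↔ x'.1 = y'.1) (h₂ : x.2 = y.2 ↔ x'.2 = y'.2) :
    ∃ σ ∈ flipSym m, σ x = x' ∧ σ y = y' := by
  obtain ⟨h, hx, hy⟩ := Perm.exists_apply_eq_apply_eq h₂
  by_cases hx₁ : x.1 = x'.1
  · refine ⟨_, wreathPerm_one_mem_flipSym h, ?_, ?_⟩ <;> refine Prod.ext ?_ ?_ <;>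
      simp [wreathPerm, *]
    omega
  · refine ⟨_, (flipSym m).mul_mem superflip_mem_flipSym (wreathPerm_one_mem_flipSym h), ?_, ?_⟩
      <;> refine Prod.ext ?_ ?_ <;> simp [wreathPerm, superflip, Fin.swap_zero_one_apply_eq_iff, *]
    omega

lemma adj_iff_adj_of_flipSym_le_autGroup {Δ : SimpleGraph (Fin 2 × Fin m)}
    (hpres : flipSym m ≤ autGroup Δ) {x y x' y' : Fin 2 × Fin m}
    (h₁ : x.1 = y.1 ↔ x'.1 = y'.1) (h₂ : x.2 = y.2 ↔ x'.2 = y'.2) :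
    Δ.Adj x y ↔ Δ.Adj x' y' := by
  obtain ⟨σ, hσ, rfl, rfl⟩ := exists_mem_flipSym_apply_eq h₁ h₂
  exact (hpres hσ x y).symm

open scoped Classical in
lemma eq_flipSymGraph_of_flipSym_le_autGroup {Δ : SimpleGraph (Fin 2 × Fin m)}
    (hpres : flipSym m ≤ autGroup Δ) {i j : Fin m} (hij : i ≠ j) :
    Δ = flipSymGraph m (Δ.Adj (0, i) (1, i)) (Δ.Adj (0, i) (0, j)) (Δ.Adj (0, i) (1, j)) := by
  ext x y
  have key : ∀ x' y' : Fin 2 × Fin m, (x.1 = y.1 ↔ x'.1 = y'.1) → (x.2 = y.2 ↔ x'.2 = y'.2) →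
      (Δ.Adj x y ↔ Δ.Adj x' y') := fun _ _ => adj_iff_adj_of_flipSym_le_autGroup hpres
  by_cases h₂ : x.2 = y.2 <;> by_cases h₁ : x.1 = y.1
  · simp [Prod.ext h₁ h₂]
  · simpa [flipSymGraph, h₁, h₂, Prod.ext_iff] using
      key (0, i) (1, i) (by simp [h₁]) (by simp [h₂])
  · simpa [flipSymGraph, h₁, h₂, Prod.ext_iff] using
      key (0, i) (0, j) (by simp [h₁]) (by simp [h₂, hij])
  · simpa [flipSymGraph, h₁, h₂, Prod.ext_iff] using
      key (0, i) (1, j) (by simp [h₁]) (by simp [h₂, hij])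

@[simp] lemma flipSymGraph_true_true_true : flipSymGraph m true true true = ⊤ := by
  ext x y; simp [flipSymGraph]

@[simp] lemma flipSymGraph_true_true_false : flipSymGraph m true true false = prism m := by
  ext ⟨a, i⟩ ⟨b, j⟩; simp [flipSymGraph, prism]; grind

@[simp] lemma flipSymGraph_true_false_true : flipSymGraph m true false true = completeBip m := by
  ext ⟨a, i⟩ ⟨b, j⟩; simp [flipSymGraph, completeBip]; grind

@[simp] lemma flipSymGraph_true_false_false : flipSymGraph m true false false = matching m := by
  ext ⟨a, i⟩ ⟨b, j⟩; simp [flipSymGraph, matching]; grind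

@[simp] lemma flipSymGraph_false_false_true : flipSymGraph m false false true = (prism m)ᶜ := by
  ext ⟨a, i⟩ ⟨b, j⟩; simp [flipSymGraph, prism]; grind

@[simp] lemma flipSymGraph_false_true_false :
    flipSymGraph m false true false = (completeBip m)ᶜ := by
  ext ⟨a, i⟩ ⟨b, j⟩; simp [flipSymGraph, completeBip]; grind

@[simp] lemma flipSymGraph_false_true_true : flipSymGraph m false true true = (matching m)ᶜ := by
  ext ⟨a, i⟩ ⟨b, j⟩; simp [flipSymGraph, matching]; grind

@[simp] lemma flipSymGraph_false_false_false : flipSymGraph m false false false = ⊥ := by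
  ext x y; simp [flipSymGraph]

lemma flipSymGraph_mem (pair layer cross : Bool) :
    flipSymGraph m pair layer cross ∈ ({prism m, completeBip m, matching m, ⊤, (prism m)ᶜ,
      (completeBip m)ᶜ, (matching m)ᶜ, ⊥} : Set (SimpleGraph (Fin 2 × Fin m))) := by
  cases pair <;> cases layer <;> cases cross <;> simp

lemma motion_flipSymGraph_le_two_of_pair_eq_cross {i j : Fin m} (hij : i ≠ j) :
    motion (flipSymGraph m pair layer pair) ≤ 2 := by
  refine motion_le_two_of_twins (u := (0, i)) (v := (0, j)) (by simpa using hij) ?_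
  rintro ⟨a, k⟩ hu hv
  simp [flipSymGraph, Prod.ext_iff] at *
  grind

lemma motion_flipSymGraph_le_two_of_layer_eq_cross (i : Fin m) :
    motion (flipSymGraph m pair layer layer) ≤ 2 := by
  refine motion_le_two_of_twins (u := (0, i)) (v := (1, i)) (by simp) ?_
  rintro ⟨a, k⟩ hu hv
  simp [flipSymGraph, Prod.ext_iff] at *
  grind

lemma motion_flipSymGraph_two_le_two_of_pair_eq_layer :
    motion (flipSymGraph 2 pair pair cross) ≤ 2 := by
  refine motion_le_two_of_twins (u := (0, 0)) (v := (1, 1)) (by decide) ?_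
  revert pair cross
  decide

lemma flipSymGraph_eq_prism_or_compl_of_motion_eq_four (hm : 2 ≤ m)
    (h4 : motion (flipSymGraph m pair layer cross) = 4) :
    3 ≤ m ∧ (flipSymGraph m pair layer cross = prism m ∨
      flipSymGraph m pair layer cross = (prism m)ᶜ) := by
  obtain ⟨i, j, hij⟩ := @exists_pair_ne _ (Fin.nontrivial_iff_two_le.mpr hm)
  have hpc : pair ≠ cross := by
    rintro rfl
    have := motion_flipSymGraph_le_two_of_pair_eq_cross (pair := pair) (layer := layer) hij
    omega
  have hlc : layer ≠ cross := by
    rintro rfl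
    have := motion_flipSymGraph_le_two_of_layer_eq_cross (pair := pair) (layer := layer) i
    omega
  obtain rfl : layer = pair := by
    revert hpc hlc; cases pair <;> cases layer <;> cases cross <;> decide
  refine ⟨?_, ?_⟩
  · by_contra hm3
    obtain rfl : m = 2 := by omega
    have := motion_flipSymGraph_two_le_two_of_pair_eq_layer (pair := layer) (cross := cross)
    omega
  · cases layer <;> cases cross <;> simp_all

end FlipSymGraph

/-- Lemma `lem:graphs_easySF`.  A graph on
`{1, -1, …, m, -m}` (`m ≥ 2`) preserved by `⟨τ⟩ × Sym(m)` is isomorphic to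
`K_m □ K₂`, `K_{m,m}`, `m K₂`, `K_{2m}`, or a complement of one of these; and if its
motion is 4, then `m ≥ 3` and it is `K_m □ K₂` or its complement. -/
theorem statement_15 (m : ℕ) (hm : 2 ≤ m) (Δ : SimpleGraph (Fin 2 × Fin m))
    (hpres : flipSym m ≤ autGroup Δ) :
    (Nonempty (Δ ≃g prism m) ∨ Nonempty (Δ ≃g completeBip m) ∨
     Nonempty (Δ ≃g matching m) ∨
     Nonempty (Δ ≃g (⊤ : SimpleGraph (Fin 2 × Fin m))) ∨
     Nonempty (Δ ≃g (prism m)ᶜ) ∨ Nonempty (Δ ≃g (completeBip m)ᶜ) ∨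
     Nonempty (Δ ≃g (matching m)ᶜ) ∨
     Nonempty (Δ ≃g (⊥ : SimpleGraph (Fin 2 × Fin m)))) ∧
    (motion Δ = 4 →
      3 ≤ m ∧ (Nonempty (Δ ≃g prism m) ∨ Nonempty (Δ ≃g (prism m)ᶜ))) := by
  obtain ⟨i, j, hij⟩ := @exists_pair_ne _ (Fin.nontrivial_iff_two_le.mpr hm)
  obtain ⟨pair, layer, cross, rfl⟩ : ∃ pair layer cross, Δ = flipSymGraph m pair layer cross :=
    ⟨_, _, _, eq_flipSymGraph_of_flipSym_le_autGroup hpres hij⟩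
  have hrefl (Γ : SimpleGraph (Fin 2 × Fin m)) : Nonempty (Γ ≃g Γ) := ⟨.refl⟩
  refine ⟨?_, fun h4 => ?_⟩
  · obtain h | h | h | h | h | h | h | (h : _ = ⊥) := flipSymGraph_mem (m := m) pair layer cross <;>
      simp [h, hrefl]
  · obtain ⟨hm3, h | h⟩ := flipSymGraph_eq_prism_or_compl_of_motion_eq_four hm h4 <;>
      simp [h, hm3, hrefl]
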